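/- arXiv:1811.10829 — 4 statements merged into one kernel-verified Lean document; each statement's English description precedes it below -/
import Mathlib

section
/- If S is a Binomial(m, μ) random variable and x = ⌊mμ⌋, then P(S ≥ x) ≥ 1/2. -/
/-- Tail probability `P(S ≥ x)` for a Binomial(m, μ) random variable `S`. -/
noncomputable def binomTail (m x : ℕ) (μ : ℝ) : ℝ :=
  ∑ k ∈ Finset.Icc x m, (m.choose k : ℝ) * μ ^ k * (1 - μ) ^ (m - k)

/-- choose identity: `n * C(n-1, j-1) = C(n,j) * j` for `1 ≤ j ≤ n`. -/
lemma choose_id1 (n j : ℕ) (h1 : 1 ≤ j) (hn : j ≤ n) :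
    n * (n-1).choose (j-1) = n.choose j * j := by
  have h := Nat.add_one_mul_choose_eq (n-1) (j-1)
  rwa [show n - 1 + 1 = n by omega, show j - 1 + 1 = j by omega] at h

/-- choose identity: `(n-j) * C(n,j) = n * C(n-1, j)` for `1 ≤ n`, `j ≤ n`. -/
lemma choose_id2 (n j : ℕ) (h1 : 1 ≤ n) (hn : j ≤ n) :
    (n - j) * n.choose j = n * (n-1).choose j := by
  rcases lt_or_ge j n with hj | hj
  · have hA := Nat.choose_succ_right_eq n j
    have hB := Nat.add_one_mul_choose_eq (n-1) j
    rw [show n - 1 + 1 = n by omega] at hB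
    -- hB : n * (n-1).choose j = n.choose (j+1) * (j+1)
    -- hA : n.choose (j+1) * (j+1) = n.choose j * (n - j)
    rw [hB, hA]; ring
  · have hjn : j = n := by omega
    subst hjn
    rw [Nat.sub_self, Nat.choose_eq_zero_of_lt (by omega : j - 1 < j)]
    simp

lemma nk_ineq (n x : ℕ) (hx1 : 1 ≤ x) (h2x : 2*x ≤ n) :
    ∀ d, d ≤ x - 1 →
      n.choose (x-1-d) * (n-x)^(2*d+1) ≤ n.choose (x+d) * x^(2*d+1) := by
  intro d
  induction d with
  | zero =>
    intro _
    simp only [Nat.sub_zero, Nat.add_zero, Nat.mul_zero, Nat.zero_add, pow_one]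
    have h := Nat.choose_succ_right_eq n (x-1)
    rw [show x - 1 + 1 = x by omega] at h
    -- h : n.choose x * x = n.choose (x-1) * (n - (x-1))
    calc n.choose (x-1) * (n-x) ≤ n.choose (x-1) * (n - (x-1)) :=
          Nat.mul_le_mul_left _ (by omega)
      _ = n.choose x * x := h.symm
  | succ d ih =>
    intro hd
    have hih := ih (by omega)
    set a := x - 1 - d with ha
    set j := x + d with hj
    have ha1 : 1 ≤ a := by omega
    have hjn : j + 1 ≤ n := by omega
    rw [show x - 1 - (d+1) = a - 1 by omega, show x + (d+1) = j + 1 by omega]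
    have hA := Nat.choose_succ_right_eq n (a-1)
    rw [show a - 1 + 1 = a by omega] at hA
    -- hA : n.choose a * a = n.choose (a-1) * (n - (a-1))
    have hB := Nat.choose_succ_right_eq n j
    -- hB : n.choose (j+1) * (j+1) = n.choose j * (n - j)
    -- quadratic inequality
    have quad : a * ((j+1) * (n-x)^2) ≤ (n-j) * ((n-(a-1)) * x^2) := by
      zify
      have e1 : ((n - j : ℕ) : ℤ) = (n:ℤ) - x - d := by omega
      have e2 : ((n - (a-1) : ℕ) : ℤ) = (n:ℤ) - x + 2 + d := by omega
      have e3 : (a:ℤ) = (x:ℤ) - 1 - d := by omega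
      have e4 : ((n-x:ℕ):ℤ) = (n:ℤ) - x := by omega
      have e5 : (j:ℤ) = (x:ℤ) + d := by omega
      rw [e1, e2, e3, e4, e5]
      have hux : (x:ℤ) ≤ (n:ℤ) - x := by omega
      have hx0 : (0:ℤ) ≤ (x:ℤ) := by positivity
      have huxsq : (x:ℤ)^2 ≤ ((n:ℤ)-x)^2 := by nlinarith
      have h2u1 : (0:ℤ) ≤ 2*((n:ℤ)-x)+1 := by omega
      nlinarith [mul_nonneg (sq_nonneg ((d:ℤ)+1)) (sub_nonneg.2 huxsq),
        mul_nonneg (mul_nonneg hx0 hx0) h2u1]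
    -- multiplied key inequality
    have key : (n.choose (a-1) * (n - (a-1))) * ((j+1) * (n-x)^(2*(d+1)+1))
        ≤ (n.choose (j+1) * (j+1)) * ((n-(a-1)) * x^(2*(d+1)+1)) := by
      rw [← hA, hB]
      calc n.choose a * a * ((j+1) * (n-x)^(2*(d+1)+1))
          = (n.choose a * (n-x)^(2*d+1)) * (a * ((j+1) * (n-x)^2)) := by
            rw [show 2*(d+1)+1 = (2*d+1) + 2 by ring, pow_add]; ring
        _ ≤ (n.choose j * x^(2*d+1)) * ((n-j) * ((n-(a-1)) * x^2)) :=
            Nat.mul_le_mul hih quad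
        _ = n.choose j * (n-j) * ((n-(a-1)) * x^(2*(d+1)+1)) := by
            rw [show 2*(d+1)+1 = (2*d+1) + 2 by ring, pow_add]; ring
    -- cancel the positive factor (n-(a-1)) * (j+1)
    have hpos : 0 < (n - (a-1)) * (j+1) := by
      have : a - 1 < n := by omega
      have : 0 < n - (a-1) := by omega
      positivity
    apply Nat.le_of_mul_le_mul_left _ hpos
    calc (n - (a-1)) * (j+1) * (n.choose (a-1) * (n-x)^(2*(d+1)+1))
        = (n.choose (a-1) * (n - (a-1))) * ((j+1) * (n-x)^(2*(d+1)+1)) := by ring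
      _ ≤ (n.choose (j+1) * (j+1)) * ((n-(a-1)) * x^(2*(d+1)+1)) := key
      _ = (n - (a-1)) * (j+1) * (n.choose (j+1) * x^(2*(d+1)+1)) := by ring

lemma binom_sum_one (n : ℕ) (p : ℝ) :
    ∑ j ∈ Finset.range (n+1), ((n.choose j : ℝ) * p^j * (1-p)^(n-j)) = 1 := by
  have h := add_pow p (1-p) n
  rw [show p + (1-p) = (1:ℝ) by ring, one_pow] at h
  rw [show ∑ j ∈ Finset.range (n+1), ((n.choose j : ℝ) * p^j * (1-p)^(n-j))
      = ∑ j ∈ Finset.range (n+1), (p^j * (1-p)^(n-j) * (n.choose j : ℝ)) from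
    Finset.sum_congr rfl (fun j _ => by ring)]
  exact h.symm

/-- cast helper: a binomial pmf term at `p = x/n` as a ratio of naturals. -/
lemma pmf_term_cast (n x j : ℕ) (hn : 0 < n) (hxn : x ≤ n) (hj : j ≤ n) :
    (n.choose j : ℝ) * ((x:ℝ)/n)^j * (1 - (x:ℝ)/n)^(n-j)
      = ((n.choose j * x^j * (n-x)^(n-j) : ℕ) : ℝ) / (n:ℝ)^n := by
  have hn0 : (n:ℝ) ≠ 0 := by positivity
  have hq : (1 - (x:ℝ)/n) = ((n-x : ℕ):ℝ)/n := by
    rw [Nat.cast_sub hxn]; field_simp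
  have hpow : (n:ℝ)^j * (n:ℝ)^(n-j) = (n:ℝ)^n := by
    rw [← pow_add]; congr 1; omega
  rw [hq, div_pow, div_pow]
  push_cast [Nat.cast_sub hxn]
  rw [← hpow]
  ring

lemma tw_real (n x i : ℕ) (hx1 : 1 ≤ x) (h2x : 2*x ≤ n) (hi : i < x) :
    (n.choose i : ℝ) * ((x:ℝ)/n)^i * (1 - (x:ℝ)/n)^(n-i)
      ≤ (n.choose (2*x-1-i) : ℝ) * ((x:ℝ)/n)^(2*x-1-i) * (1 - (x:ℝ)/n)^(n-(2*x-1-i)) := by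
  have hn : 0 < n := by omega
  set i' := 2*x-1-i with hi'
  have hi'n : i' ≤ n := by omega
  have hid : i = x - 1 - (x-1-i) := by omega
  have hnat : n.choose i * x^i * (n-x)^(n-i) ≤ n.choose i' * x^(i') * (n-x)^(n-i') := by
    have hnk := nk_ineq n x hx1 h2x (x-1-i) (by omega)
    rw [← hid, show x + (x-1-i) = i' by omega] at hnk
    calc n.choose i * x^i * (n-x)^(n-i)
        = (n.choose i * (n-x)^(2*(x-1-i)+1)) * (x^i * (n-x)^(n-i')) := by
          rw [show n - i = (2*(x-1-i)+1) + (n - i') by omega, pow_add]; ring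
      _ ≤ (n.choose i' * x^(2*(x-1-i)+1)) * (x^i * (n-x)^(n-i')) :=
          Nat.mul_le_mul_right _ hnk
      _ = n.choose i' * x^(i') * (n-x)^(n-i') := by
          rw [show i' = (2*(x-1-i)+1) + i by omega, pow_add]; ring
  rw [pmf_term_cast n x i hn (by omega) (by omega),
      pmf_term_cast n x i' hn (by omega) hi'n]
  have hnn : (0:ℝ) < (n:ℝ)^n := by positivity
  exact (div_le_div_iff_of_pos_right hnn).mpr (by exact_mod_cast hnat)

lemma caseA (n x : ℕ) (hx1 : 1 ≤ x) (h2x : 2*x ≤ n) :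
    (1:ℝ)/2 ≤ binomTail n x ((x:ℝ)/n) := by
  have hn : 0 < n := by omega
  set p := (x:ℝ)/n with hp
  have hp0 : 0 ≤ p := by positivity
  have hp1 : p ≤ 1 := by
    rw [hp, div_le_one (by positivity)]
    exact_mod_cast (by omega : x ≤ n)
  set b : ℕ → ℝ := fun j => (n.choose j : ℝ) * p^j * (1-p)^(n-j) with hb
  have hbnn : ∀ j, 0 ≤ b j := by
    intro j
    have h1 : (0:ℝ) ≤ 1 - p := by linarith
    apply mul_nonneg (mul_nonneg (by positivity) (by positivity)) (pow_nonneg h1 _)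
  have htot : ∑ j ∈ Finset.range (n+1), b j = 1 := binom_sum_one n p
  have hsplit : ∑ j ∈ Finset.Ico 0 x, b j + ∑ j ∈ Finset.Icc x n, b j = 1 := by
    rw [← Finset.Ico_add_one_right_eq_Icc, Finset.sum_Ico_consecutive b (by omega) (by omega)]
    rw [← Finset.range_eq_Ico] at *
    exact htot
  have hhalf : ∑ j ∈ Finset.Ico 0 x, b j ≤ ∑ j ∈ Finset.Icc x n, b j := by
    calc ∑ j ∈ Finset.Ico 0 x, b j
        ≤ ∑ j ∈ Finset.Ico 0 x, b (2*x-1-j) := by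
          apply Finset.sum_le_sum
          intro i hi
          simp only [Finset.mem_Ico] at hi
          exact tw_real n x i hx1 h2x hi.2
      _ = ∑ j ∈ Finset.Icc x (2*x-1), b j := by
          apply Finset.sum_nbij' (fun a => 2*x-1-a) (fun a => 2*x-1-a)
          · intro a ha; simp only [Finset.mem_Ico] at ha; simp only [Finset.mem_Icc]; omega
          · intro a ha; simp only [Finset.mem_Icc] at ha; simp only [Finset.mem_Ico]; omega
          · intro a ha; simp only [Finset.mem_Ico] at ha; omega
          · intro a ha; simp only [Finset.mem_Icc] at ha; omega
          · intro a ha; rfl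
      _ ≤ ∑ j ∈ Finset.Icc x n, b j := by
          apply Finset.sum_le_sum_of_subset_of_nonneg
          · exact Finset.Icc_subset_Icc_right (by omega)
          · exact fun i _ _ => hbnn i
  have : binomTail n x p = ∑ j ∈ Finset.Icc x n, b j := rfl
  rw [this]
  linarith

lemma term_hasDerivAt (n j : ℕ) (hj1 : 1 ≤ j) (hjn : j ≤ n) (μ : ℝ) :
    HasDerivAt (fun t : ℝ => (n.choose j : ℝ) * t^j * (1-t)^(n-j))
      (((n:ℝ) * ((n-1).choose (j-1))) * μ^(j-1) * (1-μ)^(n-1-(j-1))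
        - ((n:ℝ) * ((n-1).choose j)) * μ^j * (1-μ)^(n-1-j)) μ := by
  have hsub : HasDerivAt (fun t:ℝ => 1 - t) (-1) μ := by
    simpa using (hasDerivAt_id μ).const_sub (1:ℝ)
  have h2 : HasDerivAt (fun t:ℝ => (1-t)^(n-j))
      (((n-j:ℕ):ℝ) * (1-μ)^(n-j-1) * (-1)) μ := hsub.pow (n-j)
  have h1 : HasDerivAt (fun t:ℝ => t^j) ((j:ℝ) * μ^(j-1)) μ := hasDerivAt_pow j μ
  have hmul : HasDerivAt (fun t:ℝ => (n.choose j:ℝ) * (t^j * (1-t)^(n-j)))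
      ((n.choose j : ℝ) * ((j:ℝ) * μ^(j-1) * (1-μ)^(n-j) + μ^j * (((n-j:ℕ):ℝ) * (1-μ)^(n-j-1) * (-1)))) μ :=
    (h1.mul h2).const_mul ((n.choose j : ℝ))
  have hfeq : (fun t:ℝ => (n.choose j:ℝ) * (t^j * (1-t)^(n-j)))
      = fun t:ℝ => (n.choose j:ℝ) * t^j * (1-t)^(n-j) := by
    funext t; ring
  rw [hfeq] at hmul
  convert hmul using 1
  have c1 : (j:ℝ) * (n.choose j : ℝ) = (n:ℝ) * ((n-1).choose (j-1) : ℝ) := by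
    have := congrArg (Nat.cast (R := ℝ)) (choose_id1 n j hj1 hjn)
    push_cast at this; linarith
  have c2 : ((n-j:ℕ):ℝ) * (n.choose j : ℝ) = (n:ℝ) * ((n-1).choose j : ℝ) := by
    exact_mod_cast congrArg (Nat.cast (R := ℝ)) (choose_id2 n j (by omega) hjn)
  rw [show n-1-(j-1) = n-j by omega, show n-j-1 = n-1-j by omega]
  linear_combination (μ^j * (1-μ)^(n-1-j)) * c2 - (μ^(j-1) * (1-μ)^(n-j)) * c1

lemma binomTail_hasDerivAt (n x : ℕ) (hx1 : 1 ≤ x) (hxn : x ≤ n) (μ : ℝ) :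
    HasDerivAt (fun t => binomTail n x t)
      (((x:ℝ) * (n.choose x : ℝ)) * μ^(x-1) * (1-μ)^(n-x)) μ := by
  set v : ℕ → ℝ := fun i => ((n:ℝ) * ((n-1).choose i : ℝ)) * μ^i * (1-μ)^(n-1-i) with hv
  have hsum : HasDerivAt (fun t => ∑ j ∈ Finset.Icc x n, (n.choose j : ℝ) * t^j * (1-t)^(n-j))
      (∑ j ∈ Finset.Icc x n, (v (j-1) - v j)) μ := by
    apply HasDerivAt.fun_sum
    intro j hj
    simp only [Finset.mem_Icc] at hj
    exact term_hasDerivAt n j (by omega) hj.2 μ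
  have htel : ∑ j ∈ Finset.Icc x n, (v (j-1) - v j) = v (x-1) := by
    rw [← Finset.Ico_add_one_right_eq_Icc, Finset.sum_Ico_eq_sum_range]
    rw [Finset.sum_congr rfl (fun k _ => by
      rw [show x + k - 1 = (x-1) + k by omega, show x + k = (x-1) + (k+1) by omega])]
    rw [Finset.sum_range_sub' (fun i => v ((x-1)+i))]
    rw [show (x-1) + (n+1-x) = n by omega, Nat.add_zero]
    have hvn : v n = 0 := by
      rw [hv]; simp [Nat.choose_eq_zero_of_lt (by omega : n-1 < n)]
    rw [hvn, sub_zero]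
  rw [htel] at hsum
  have hvx : v (x-1) = ((x:ℝ) * (n.choose x : ℝ)) * μ^(x-1) * (1-μ)^(n-x) := by
    show ((n:ℝ) * ((n-1).choose (x-1) : ℝ)) * μ^(x-1) * (1-μ)^(n-1-(x-1))
        = ((x:ℝ) * (n.choose x : ℝ)) * μ^(x-1) * (1-μ)^(n-x)
    rw [show n-1-(x-1) = n-x by omega]
    have : (n:ℝ) * ((n-1).choose (x-1) : ℝ) = (x:ℝ) * (n.choose x : ℝ) := by
      have := congrArg (Nat.cast (R := ℝ)) (choose_id1 n x hx1 hxn)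
      push_cast at this
      linarith
    rw [this]
  rw [hvx] at hsum
  exact hsum

lemma binomTail_diff (n x : ℕ) (hx1 : 1 ≤ x) (hxn : x ≤ n) (a c : ℝ) :
    binomTail n x c - binomTail n x a
      = ∫ t in a..c, ((x:ℝ) * (n.choose x : ℝ)) * t^(x-1) * (1-t)^(n-x) := by
  refine (intervalIntegral.integral_eq_sub_of_hasDerivAt
    (fun t _ => binomTail_hasDerivAt n x hx1 hxn t) ?_).symm
  apply Continuous.intervalIntegrable
  fun_prop

lemma binomTail_one (n x : ℕ) (hxn : x ≤ n) : binomTail n x 1 = 1 := by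
  unfold binomTail
  rw [Finset.sum_eq_single n]
  · simp
  · intro j hj hne
    simp only [Finset.mem_Icc] at hj
    rw [show (1:ℝ) - 1 = 0 by ring, zero_pow (by omega : n - j ≠ 0)]
    ring
  · intro h
    exact absurd (Finset.mem_Icc.2 ⟨hxn, le_refl n⟩) h

lemma binomTail_nonneg (n x : ℕ) {μ : ℝ} (h0 : 0 ≤ μ) (h1 : μ ≤ 1) :
    0 ≤ binomTail n x μ := by
  apply Finset.sum_nonneg
  intro j _
  have : (0:ℝ) ≤ 1 - μ := by linarith
  apply mul_nonneg (mul_nonneg (by positivity) (by positivity)) (pow_nonneg this _)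

lemma binomTail_mono (n x : ℕ) (hx1 : 1 ≤ x) (hxn : x ≤ n) {a c : ℝ}
    (h0 : 0 ≤ a) (hac : a ≤ c) (hc1 : c ≤ 1) :
    binomTail n x a ≤ binomTail n x c := by
  have hd := binomTail_diff n x hx1 hxn a c
  have hnn : 0 ≤ ∫ t in a..c, ((x:ℝ) * (n.choose x : ℝ)) * t^(x-1) * (1-t)^(n-x) := by
    apply intervalIntegral.integral_nonneg hac
    intro u hu
    simp only [Set.mem_Icc] at hu
    have h1 : (0:ℝ) ≤ u := le_trans h0 hu.1
    have h2 : (0:ℝ) ≤ 1 - u := by linarith [le_trans hu.2 hc1]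
    apply mul_nonneg (mul_nonneg (by positivity) (pow_nonneg h1 _)) (pow_nonneg h2 _)
  linarith

/-- Key reflection inequality. -/
lemma key_ineq (x m : ℕ) (hx1 : 1 ≤ x) (hmx : m ≤ x) (σ : ℝ)
    (h0 : 0 ≤ σ) (hm : σ ≤ (m:ℝ)) :
    ((x:ℝ)+σ)^(x-1) * ((m:ℝ)-σ)^m ≤ ((x:ℝ)-σ)^(x-1) * ((m:ℝ)+σ)^m := by
  have hmxR : (m:ℝ) ≤ (x:ℝ) := by exact_mod_cast hmx
  have hx0R : (1:ℝ) ≤ (x:ℝ) := by exact_mod_cast hx1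
  rcases eq_or_lt_of_le hm with heq | hlt
  · rcases Nat.eq_zero_or_pos m with hm0 | hm1
    · subst hm0
      have : σ = 0 := le_antisymm (by simpa using hm) h0
      subst this
      simp
    · rw [show (m:ℝ) - σ = 0 by rw [heq, sub_self], zero_pow (by omega : m ≠ 0), mul_zero]
      have hxs : (0:ℝ) ≤ (x:ℝ) - σ := by linarith
      have hmps : (0:ℝ) ≤ (m:ℝ) + σ := by linarith [Nat.cast_nonneg (α := ℝ) m]
      positivity
  · have hm0 : (0:ℝ) < (m:ℝ) := lt_of_le_of_lt h0 hlt
    have hxs : (0:ℝ) < (x:ℝ) - σ := by linarith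
    have hxps : (0:ℝ) < (x:ℝ) + σ := by linarith
    have hms : (0:ℝ) < (m:ℝ) - σ := by linarith
    have hmps : (0:ℝ) < (m:ℝ) + σ := by linarith
    set F : ℝ → ℝ := fun s =>
      (m:ℝ) * (Real.log ((m:ℝ)+s) - Real.log ((m:ℝ)-s))
        - ((x:ℝ)-1) * (Real.log ((x:ℝ)+s) - Real.log ((x:ℝ)-s)) with hF
    set G : ℝ → ℝ := fun s =>
      (m:ℝ) * (1/((m:ℝ)+s) + 1/((m:ℝ)-s))
        - ((x:ℝ)-1) * (1/((x:ℝ)+s) + 1/((x:ℝ)-s)) with hG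
    have hasF : ∀ s ∈ Set.Icc (0:ℝ) σ, HasDerivAt F (G s) s := by
      intro s hs
      obtain ⟨hs0, hsσ⟩ := hs
      have h1 : (0:ℝ) < (m:ℝ) + s := by linarith
      have h2 : (0:ℝ) < (m:ℝ) - s := by linarith
      have h3 : (0:ℝ) < (x:ℝ) + s := by linarith
      have h4 : (0:ℝ) < (x:ℝ) - s := by linarith
      have d1 : HasDerivAt (fun t : ℝ => Real.log ((m:ℝ) + t)) (1/((m:ℝ)+s)) s := by
        have := ((hasDerivAt_id s).const_add (m:ℝ)).log (by simpa using (ne_of_gt h1))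
        simpa using this
      have d2 : HasDerivAt (fun t : ℝ => Real.log ((m:ℝ) - t)) (-(1/((m:ℝ)-s))) s := by
        have := ((hasDerivAt_id s).const_sub (m:ℝ)).log (by simpa using (ne_of_gt h2))
        simpa [neg_div] using this
      have d3 : HasDerivAt (fun t : ℝ => Real.log ((x:ℝ) + t)) (1/((x:ℝ)+s)) s := by
        have := ((hasDerivAt_id s).const_add (x:ℝ)).log (by simpa using (ne_of_gt h3))
        simpa using this
      have d4 : HasDerivAt (fun t : ℝ => Real.log ((x:ℝ) - t)) (-(1/((x:ℝ)-s))) s := by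
        have := ((hasDerivAt_id s).const_sub (x:ℝ)).log (by simpa using (ne_of_gt h4))
        simpa [neg_div] using this
      have hd := ((d1.sub d2).const_mul ((m:ℝ))).sub ((d3.sub d4).const_mul ((x:ℝ)-1))
      refine hd.congr_deriv ?_
      simp only [hG]; ring
    have hmono : MonotoneOn F (Set.Icc 0 σ) := by
      apply monotoneOn_of_deriv_nonneg (convex_Icc 0 σ)
      · intro s hs
        exact (hasF s hs).continuousAt.continuousWithinAt
      · intro s hs
        rw [interior_Icc] at hs
        exact (hasF s (Set.Ioo_subset_Icc_self hs)).differentiableAt.differentiableWithinAt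
      · intro s hs
        rw [interior_Icc] at hs
        rw [(hasF s (Set.Ioo_subset_Icc_self hs)).deriv]
        obtain ⟨hs0, hsσ⟩ := hs
        have hs0' : (0:ℝ) ≤ s := le_of_lt hs0
        have hsσ' : s ≤ σ := le_of_lt hsσ
        have h1 : (0:ℝ) < (m:ℝ) + s := by linarith
        have h2 : (0:ℝ) < (m:ℝ) - s := by linarith
        have h3 : (0:ℝ) < (x:ℝ) + s := by linarith
        have h4 : (0:ℝ) < (x:ℝ) - s := by linarith
        have hm2 : (0:ℝ) < (m:ℝ)^2 - s^2 := by nlinarith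
        have hx2 : (0:ℝ) < (x:ℝ)^2 - s^2 := by nlinarith
        have e1 : 1/((m:ℝ)+s) + 1/((m:ℝ)-s) = 2*(m:ℝ)/((m:ℝ)^2 - s^2) := by
          rw [div_add_div _ _ (ne_of_gt h1) (ne_of_gt h2), eq_div_iff (ne_of_gt hm2)]
          field_simp
          ring
        have e2 : 1/((x:ℝ)+s) + 1/((x:ℝ)-s) = 2*(x:ℝ)/((x:ℝ)^2 - s^2) := by
          rw [div_add_div _ _ (ne_of_gt h3) (ne_of_gt h4), eq_div_iff (ne_of_gt hx2)]
          field_simp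
          ring
        show (0:ℝ) ≤ (m:ℝ) * (1/((m:ℝ)+s) + 1/((m:ℝ)-s))
            - ((x:ℝ)-1) * (1/((x:ℝ)+s) + 1/((x:ℝ)-s))
        rw [e1, e2, sub_nonneg, ← mul_div_assoc, ← mul_div_assoc,
          div_le_div_iff₀ hx2 hm2]
        have hA : (0:ℝ) ≤ ((m:ℝ)^2 - s^2) * (x:ℝ) :=
          mul_nonneg (le_of_lt hm2) (by positivity)
        have hB : (0:ℝ) ≤ s^2 * ((x:ℝ)^2 - (m:ℝ)^2) :=
          mul_nonneg (sq_nonneg s) (by nlinarith)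
        nlinarith [hA, hB]
    have h2 := hmono (Set.left_mem_Icc.2 h0) (Set.right_mem_Icc.2 h0) h0
    have hF0 : F 0 = 0 := by
      rw [hF]; norm_num
    rw [hF0] at h2
    have hFσ : F σ = (m:ℝ) * (Real.log ((m:ℝ)+σ) - Real.log ((m:ℝ)-σ))
        - ((x:ℝ)-1) * (Real.log ((x:ℝ)+σ) - Real.log ((x:ℝ)-σ)) := by rw [hF]
    rw [hFσ] at h2
    -- exponentiate
    have hLpos : (0:ℝ) < ((x:ℝ)+σ)^(x-1) * ((m:ℝ)-σ)^m :=
      mul_pos (pow_pos hxps _) (pow_pos hms _)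
    have hRpos : (0:ℝ) < ((x:ℝ)-σ)^(x-1) * ((m:ℝ)+σ)^m :=
      mul_pos (pow_pos hxs _) (pow_pos hmps _)
    rw [← Real.log_le_log_iff hLpos hRpos,
      Real.log_mul (ne_of_gt (pow_pos hxps _)) (ne_of_gt (pow_pos hms _)),
      Real.log_mul (ne_of_gt (pow_pos hxs _)) (ne_of_gt (pow_pos hmps _)),
      Real.log_pow, Real.log_pow, Real.log_pow, Real.log_pow]
    have hc : ((x-1:ℕ):ℝ) = (x:ℝ) - 1 := by
      rw [Nat.cast_sub hx1]; norm_num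
    rw [hc]
    linarith [h2]

lemma pointwise_B (n x : ℕ) (hx1 : 1 ≤ x) (hxn : x ≤ n) (hn2 : n ≤ 2*x) (hn : 0 < n)
    (t : ℝ) (ht1 : 2*((x:ℝ)/n)-1 ≤ t) (ht2 : t ≤ (x:ℝ)/n) :
    ((x:ℝ) * (n.choose x : ℝ)) * (2*((x:ℝ)/n) - t)^(x-1) * (1-(2*((x:ℝ)/n) - t))^(n-x)
      ≤ ((x:ℝ) * (n.choose x : ℝ)) * t^(x-1) * (1-t)^(n-x) := by
  have hnR : (0:ℝ) < (n:ℝ) := by exact_mod_cast hn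
  set m : ℕ := n - x with hmdef
  have hmcast : (m:ℝ) = (n:ℝ) - (x:ℝ) := by
    rw [hmdef, Nat.cast_sub hxn]
  have hmx : m ≤ x := by omega
  set p : ℝ := (x:ℝ)/n with hp
  set σ : ℝ := (n:ℝ)*(p - t) with hσ
  have hσ0 : 0 ≤ σ := by
    rw [hσ]; apply mul_nonneg hnR.le; linarith
  have hσm : σ ≤ (m:ℝ) := by
    rw [hσ, hmcast]
    have h5 : p - t ≤ 1 - p := by linarith
    have h3 : (n:ℝ)*(p-t) ≤ (n:ℝ)*(1-p) := mul_le_mul_of_nonneg_left h5 hnR.le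
    have h4 : (n:ℝ)*(1-p) = (n:ℝ) - x := by rw [hp]; field_simp
    linarith
  have e1 : 2*p - t = ((x:ℝ)+σ)/n := by
    rw [hσ, hp]; field_simp; ring
  have e2 : 1 - (2*p - t) = ((m:ℝ)-σ)/n := by
    rw [hσ, hp, hmcast]; field_simp; ring
  have e3 : t = ((x:ℝ)-σ)/n := by
    rw [hσ, hp]; field_simp; ring
  have e4 : 1 - t = ((m:ℝ)+σ)/n := by
    rw [hσ, hp, hmcast]; field_simp; ring
  rw [e2, e1]
  conv_rhs => rw [e4, e3]
  rw [div_pow, div_pow, div_pow, div_pow]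
  have hkey := key_ineq x m hx1 hmx σ hσ0 hσm
  have hcnn : (0:ℝ) ≤ ((x:ℝ) * (n.choose x : ℝ)) / ((n:ℝ)^(x-1) * (n:ℝ)^m) := by positivity
  calc ((x:ℝ) * (n.choose x : ℝ)) * (((x:ℝ)+σ)^(x-1)/(n:ℝ)^(x-1)) * (((m:ℝ)-σ)^m/(n:ℝ)^m)
      = (((x:ℝ) * (n.choose x : ℝ)) / ((n:ℝ)^(x-1) * (n:ℝ)^m)) * (((x:ℝ)+σ)^(x-1) * ((m:ℝ)-σ)^m) := by
        ring
    _ ≤ (((x:ℝ) * (n.choose x : ℝ)) / ((n:ℝ)^(x-1) * (n:ℝ)^m)) * (((x:ℝ)-σ)^(x-1) * ((m:ℝ)+σ)^m) :=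
        mul_le_mul_of_nonneg_left hkey hcnn
    _ = ((x:ℝ) * (n.choose x : ℝ)) * (((x:ℝ)-σ)^(x-1)/(n:ℝ)^(x-1)) * (((m:ℝ)+σ)^m/(n:ℝ)^m) := by
        ring

lemma caseB (n x : ℕ) (hx1 : 1 ≤ x) (hxn : x ≤ n) (hn2 : n ≤ 2*x) :
    (1:ℝ)/2 ≤ binomTail n x ((x:ℝ)/n) := by
  have hn : 0 < n := by omega
  have hnR : (0:ℝ) < (n:ℝ) := by exact_mod_cast hn
  set p : ℝ := (x:ℝ)/n with hp
  have hxnR : (x:ℝ) ≤ (n:ℝ) := by exact_mod_cast hxn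
  have hp0 : 0 ≤ p := by positivity
  have hp1 : p ≤ 1 := by rw [hp, div_le_one hnR]; exact hxnR
  have h2p : 0 ≤ 2*p - 1 := by
    have h : (n:ℝ) ≤ 2*(x:ℝ) := by exact_mod_cast hn2
    have : 2*p - 1 = (2*(x:ℝ) - n)/n := by rw [hp]; field_simp
    rw [this]
    apply div_nonneg (by linarith) hnR.le
  have hle : 2*p - 1 ≤ p := by linarith
  have hcont : Continuous (fun t : ℝ => ((x:ℝ) * (n.choose x : ℝ)) * t^(x-1) * (1-t)^(n-x)) := by
    fun_prop
  have hcont2 : Continuous (fun t : ℝ =>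
      ((x:ℝ) * (n.choose x : ℝ)) * (2*p - t)^(x-1) * (1-(2*p - t))^(n-x)) := by
    fun_prop
  have hdiff1 := binomTail_diff n x hx1 hxn p 1
  have hdiff2 := binomTail_diff n x hx1 hxn (2*p-1) p
  have hT1 := binomTail_one n x hxn
  have hTnn := binomTail_nonneg n x h2p (by linarith : 2*p-1 ≤ 1)
  have hrefl : (∫ t in (2*p-1)..p,
        ((x:ℝ) * (n.choose x : ℝ)) * (2*p - t)^(x-1) * (1-(2*p - t))^(n-x))
      = ∫ t in p..1, ((x:ℝ) * (n.choose x : ℝ)) * t^(x-1) * (1-t)^(n-x) := by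
    have h := intervalIntegral.integral_comp_sub_left (a := 2*p-1) (b := p)
      (fun t => ((x:ℝ) * (n.choose x : ℝ)) * t^(x-1) * (1-t)^(n-x)) (2*p)
    rw [show 2*p - p = p by ring, show 2*p - (2*p-1) = (1:ℝ) by ring] at h
    exact h
  have hmono : (∫ t in (2*p-1)..p,
        ((x:ℝ) * (n.choose x : ℝ)) * (2*p - t)^(x-1) * (1-(2*p - t))^(n-x))
      ≤ ∫ t in (2*p-1)..p, ((x:ℝ) * (n.choose x : ℝ)) * t^(x-1) * (1-t)^(n-x) := by
    apply intervalIntegral.integral_mono_on hle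
      (hcont2.intervalIntegrable _ _) (hcont.intervalIntegrable _ _)
    intro t ht
    exact pointwise_B n x hx1 hxn hn2 hn t ht.1 ht.2
  rw [hT1] at hdiff1
  linarith [hdiff1, hdiff2, hmono, hrefl, hTnn]

/-- The median of a Binomial(m, μ) is at least `⌊mμ⌋`:
if `x = ⌊mμ⌋` then `P(S ≥ x) ≥ 1/2`. -/
theorem binomial_tail_at_floor_mean (m x : ℕ) (μ : ℝ)
    (hμ0 : 0 ≤ μ) (hμ1 : μ ≤ 1) (hx : x = ⌊(m : ℝ) * μ⌋₊) :
    (1 : ℝ) / 2 ≤ binomTail m x μ := by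
  by_cases hx0 : x = 0
  · subst hx0
    have h1 : binomTail m 0 μ = 1 := by
      unfold binomTail
      rw [show Finset.Icc 0 m = Finset.range (m+1) by
        rw [← Finset.Ico_add_one_right_eq_Icc, Finset.range_eq_Ico]]
      exact binom_sum_one m μ
    rw [h1]; norm_num
  · have hx1 : 1 ≤ x := by omega
    have hm0 : 0 < m := by
      rcases Nat.eq_zero_or_pos m with h | h
      · exfalso; apply hx0; rw [hx, h]; norm_num
      · exact h
    have hmR : (0:ℝ) < (m:ℝ) := by exact_mod_cast hm0
    have hxle : (x:ℝ) ≤ (m:ℝ) * μ := by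
      rw [hx]; exact Nat.floor_le (by positivity)
    have hxm : x ≤ m := by
      rw [hx]
      calc ⌊(m:ℝ)*μ⌋₊ ≤ ⌊(m:ℝ)⌋₊ := Nat.floor_le_floor (by nlinarith)
        _ = m := Nat.floor_natCast m
    have hpμ : (x:ℝ)/m ≤ μ := by
      rw [div_le_iff₀ hmR]; nlinarith
    have hp0 : 0 ≤ (x:ℝ)/m := by positivity
    have hstep : (1:ℝ)/2 ≤ binomTail m x ((x:ℝ)/m) := by
      by_cases hAB : 2*x ≤ m
      · exact caseA m x hx1 hAB
      · exact caseB m x hx1 hxm (by omega)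
    have hmono := binomTail_mono m x hx1 hxm hp0 hpμ hμ1
    linarith
end

section
/- Consider the single-stage Bellman value J_1(X) = -λX + max_{0 ≤ x ≤ X, m ≥ 0} { -dm + x·P_{m,x}(μ)·(1+λ) } with d > 0, λ ≥ 0, X a nonnegative integer, and P_{m,x}(μ) = P(Binomial(m,μ) ≥ x) with P_{m,0}(μ)=1 and P_{0,x}(μ)=0 for x>0. If μ < d/(1+λ), then the maximum is attained only at m = 0 (equivalently, -dm + x·P_{m,x}(μ)(1+λ) < 0 for all m ≥ 1 and 1 ≤ x ≤ X), so J_1(X) = -λX. -/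
open Finset Polynomial

theorem sum_range_mul_choose_mul_pow_mul_pow (m : ℕ) (μ : ℝ) :
    ∑ k ∈ range (m + 1), (k : ℝ) * ((m.choose k : ℝ) * μ ^ k * (1 - μ) ^ (m - k)) = m * μ := by
  simpa [eval_finsetSum, bernsteinPolynomial] using
    congrArg (eval μ) (bernsteinPolynomial.sum_smul ℝ m)

theorem mul_binomTail_le (m x : ℕ) {μ : ℝ} (hμ0 : 0 ≤ μ) (hμ1 : μ ≤ 1) :
    x * binomTail m x μ ≤ m * μ := by
  have hterm : ∀ k, 0 ≤ (m.choose k : ℝ) * μ ^ k * (1 - μ) ^ (m - k) := fun k => by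
    have : 0 ≤ 1 - μ := sub_nonneg.mpr hμ1
    positivity
  calc (x : ℝ) * binomTail m x μ
      ≤ ∑ k ∈ Icc x m, (k : ℝ) * ((m.choose k : ℝ) * μ ^ k * (1 - μ) ^ (m - k)) := by
        rw [binomTail, mul_sum]
        gcongr with k hk
        exact_mod_cast (mem_Icc.mp hk).1
    _ ≤ ∑ k ∈ range (m + 1), (k : ℝ) * ((m.choose k : ℝ) * μ ^ k * (1 - μ) ^ (m - k)) := by
        refine sum_le_sum_of_subset_of_nonneg (fun k hk => ?_) fun k _ _ =>
          mul_nonneg k.cast_nonneg (hterm k)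
        simp only [mem_Icc, mem_range] at hk ⊢
        omega
    _ = m * μ := sum_range_mul_choose_mul_pow_mul_pow m μ

theorem revenue_le_mul_sub {d c μ : ℝ} (m x : ℕ) (hc : 0 ≤ c) (hμ0 : 0 ≤ μ) (hμ1 : μ ≤ 1) :
    -d * m + x * binomTail m x μ * c ≤ m * (μ * c - d) := by
  nlinarith [mul_le_mul_of_nonneg_right (mul_binomTail_le m x hμ0 hμ1) hc]

theorem idle_region_general (d lam μ : ℝ) (X : ℕ) (hlam : 0 ≤ lam)
    (hμ0 : 0 ≤ μ) (hμ1 : μ ≤ 1) (hμ : μ < d / (1 + lam)) :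
    (∀ m x : ℕ, 1 ≤ m → 1 ≤ x → x ≤ X →
      -d * (m : ℝ) + (x : ℝ) * binomTail m x μ * (1 + lam) < 0) ∧
    (∀ m x : ℕ, x ≤ X →
      -d * (m : ℝ) + (x : ℝ) * binomTail m x μ * (1 + lam) ≤ 0) := by
  have hc : (0 : ℝ) ≤ 1 + lam := by linarith
  have hgain : μ * (1 + lam) - d < 0 := by
    linarith [(lt_div_iff₀ (by linarith : (0 : ℝ) < 1 + lam)).mp hμ]
  refine ⟨fun m x hm _ _ => (revenue_le_mul_sub m x hc hμ0 hμ1).trans_lt ?_,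
    fun m x _ => (revenue_le_mul_sub m x hc hμ0 hμ1).trans ?_⟩
  · exact mul_neg_of_pos_of_neg (by exact_mod_cast hm) hgain
  · exact mul_nonpos_of_nonneg_of_nonpos m.cast_nonneg hgain.le

/-- Idle region (Lemma 2): if `μ < d/(1+λ)` then every decision `(m, x)` with
`m ≥ 1`, `1 ≤ x ≤ X` has strictly negative expected one-slot revenue
`-dm + x·P_{m,x}(μ)·(1+λ)`, and every decision `(m, x)` with `x ≤ X` has
nonpositive revenue; so the maximum is attained only at `m = 0` and
`J_1(X) = -λX`. -/
theorem idle_region (d lam μ : ℝ) (X : ℕ) (hd : 0 < d) (hlam : 0 ≤ lam)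
    (hμ0 : 0 ≤ μ) (hμ1 : μ ≤ 1) (hμ : μ < d / (1 + lam)) :
    (∀ m x : ℕ, 1 ≤ m → 1 ≤ x → x ≤ X →
      -d * (m : ℝ) + (x : ℝ) * binomTail m x μ * (1 + lam) < 0) ∧
    (∀ m x : ℕ, x ≤ X →
      -d * (m : ℝ) + (x : ℝ) * binomTail m x μ * (1 + lam) ≤ 0) :=
  idle_region_general d lam μ X hlam hμ0 hμ1 hμ
end

section
/- Let ν(m,x) = -dm + (1+λ)·x·(1 - Φ((x - mμ)/√(mμ(1-μ)))) for m > 0, with d > 0, λ ≥ 0 and μ ∈ (0,1) satisfying μ ≥ 2d/(1+λ). Then for any fixed x ≥ π/2, the partial derivative of ν with respect to m evaluated at m = x/μ is strictly positive, i.e., (1+λ)·μ·√(x/(2π(1-μ))) - d > 0. -/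
open Real

/-- In the continuous (Gaussian) approximation, under the feasibility condition
`μ ≥ 2d/(1+λ)` and for `x ≥ π/2`, the derivative of the revenue
`ν(m,x) = -dm + (1+λ)·x·(1 - Φ((x-mμ)/√(mμ(1-μ))))` with respect to `m`,
evaluated at `m = x/μ`, namely `(1+λ)·μ·√(x/(2π(1-μ))) - d`, is strictly
positive. -/
theorem deriv_at_rate_mu_pos (d lam μ x : ℝ) (hd : 0 < d) (hlam : 0 ≤ lam)
    (hμ0 : 0 < μ) (hμ1 : μ < 1) (hμ : 2 * d / (1 + lam) ≤ μ)
    (hx : Real.pi / 2 ≤ x) :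
    0 < (1 + lam) * μ * Real.sqrt (x / (2 * Real.pi * (1 - μ))) - d := by
  have hπ := Real.pi_pos
  have hden : (0:ℝ) < 2 * Real.pi * (1 - μ) := by nlinarith
  have h2 : (1/2 : ℝ)^2 < x / (2 * Real.pi * (1 - μ)) := by
    rw [lt_div_iff₀ hden]; nlinarith
  have h3 : (1/2 : ℝ) < Real.sqrt (x / (2 * Real.pi * (1 - μ))) := by
    rw [show (1/2:ℝ) = Real.sqrt ((1/2)^2) by rw [Real.sqrt_sq]; norm_num]
    exact Real.sqrt_lt_sqrt (by positivity) h2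
  have hlm : 2 * d ≤ (1 + lam) * μ := by
    rw [div_le_iff₀ (by linarith)] at hμ; nlinarith
  nlinarith [h3, hlm, Real.sqrt_nonneg (x / (2 * Real.pi * (1 - μ)))]
end

section
/- In the delay-tolerant system, the optimal number of activated channels m_t = argmax_{m≥0}{ -dm + (1-(1-μ)^m)(1 - J_{t-1}(1)) } is nonincreasing in the time-to-deadline: m_t ≤ m_{t-1} for all t, where J_t(1) is the value function of the previous statement. Equivalently: if J ≤ J' ≤ 1 are two terminal values and m(J) denotes the maximizer of g_J(m) = -dm + (1-(1-μ)^m)(1-J) over nonnegative integers m (ties broken by the rule m(J) = k iff (1-μ)^k μ < d/(1-J) < (1-μ)^{k-1} μ, and m(J)=0 iff μ < d/(1-J)), then m(J') ≤ m(J). -/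
/-!
Write `x = d / (1 - J)`. Both branches of the characterization of an optimal `m` give
`(1 - μ) ^ m * μ < x`, and a nonzero optimal `m` also gives `x < (1 - μ) ^ (m - 1) * μ`.
The thresholds `(1 - μ) ^ k * μ` decrease in `k`, so if `m < m'` the bracket of `m'` lies
below `x(J)` while `x(J') ≥ x(J)` must lie inside it.
-/

/-- The characterization of the maximizer `m` of `-d m + (1 - (1 - μ) ^ m) (1 - J)`
in terms of `x = d / (1 - J)`. -/
def IsOptimalChannels (μ x : ℝ) (m : ℕ) : Prop :=
  (m = 0 ∧ μ < x) ∨ (1 ≤ m ∧ (1 - μ) ^ m * μ < x ∧ x < (1 - μ) ^ (m - 1) * μ)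

lemma antitone_pow_mul {μ : ℝ} (hμ0 : 0 ≤ μ) (hμ1 : μ ≤ 1) :
    Antitone fun k : ℕ => (1 - μ) ^ k * μ :=
  fun _ _ hkl => mul_le_mul_of_nonneg_right
    (pow_right_anti₀ (by linarith) (by linarith) hkl) hμ0

lemma le_of_lt_of_le_of_lt_of_antitone {a : ℕ → ℝ} (ha : Antitone a) {x x' : ℝ} {m m' : ℕ}
    (hm : a m < x) (hxx' : x ≤ x') (hm' : x' < a (m' - 1)) : m' ≤ m := by
  by_contra! hlt
  have : a (m' - 1) ≤ a m := ha (by omega)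
  linarith

namespace IsOptimalChannels

variable {μ x : ℝ} {m : ℕ}

lemma pow_mul_lt (h : IsOptimalChannels μ x m) : (1 - μ) ^ m * μ < x := by
  rcases h with ⟨rfl, hx⟩ | ⟨-, hx, -⟩
  · simpa using hx
  · exact hx

lemma pos (hμ0 : 0 ≤ μ) (hμ1 : μ ≤ 1) (h : IsOptimalChannels μ x m) : 0 < x :=
  lt_of_le_of_lt (mul_nonneg (pow_nonneg (by linarith) _) hμ0) h.pow_mul_lt

lemma antitone {x' : ℝ} {m' : ℕ} (hμ0 : 0 ≤ μ) (hμ1 : μ ≤ 1) (h : IsOptimalChannels μ x m)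
    (h' : IsOptimalChannels μ x' m') (hxx' : x ≤ x') : m' ≤ m := by
  rcases h' with ⟨rfl, -⟩ | ⟨-, -, hm'⟩
  · exact Nat.zero_le m
  · exact le_of_lt_of_le_of_lt_of_antitone (antitone_pow_mul hμ0 hμ1) h.pow_mul_lt hxx' hm'

end IsOptimalChannels

theorem optimal_channels_antitone_general (d μ : ℝ) (hd0 : 0 < d)
    (hμ0 : 0 < μ) (hμ1 : μ < 1) (J J' : ℝ) (hJJ' : J ≤ J')
    (mJ mJ' : ℕ)
    (hmJ : (mJ = 0 ∧ μ < d / (1 - J)) ∨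
      (1 ≤ mJ ∧ (1 - μ) ^ mJ * μ < d / (1 - J) ∧
        d / (1 - J) < (1 - μ) ^ (mJ - 1) * μ))
    (hmJ' : (mJ' = 0 ∧ μ < d / (1 - J')) ∨
      (1 ≤ mJ' ∧ (1 - μ) ^ mJ' * μ < d / (1 - J') ∧
        d / (1 - J') < (1 - μ) ^ (mJ' - 1) * μ)) :
    mJ' ≤ mJ := by
  have hJ' : 0 < 1 - J' :=
    (div_pos_iff_of_pos_left hd0).mp (IsOptimalChannels.pos hμ0.le hμ1.le hmJ')
  have hdiv : d / (1 - J) ≤ d / (1 - J') :=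
    div_le_div_of_nonneg_left hd0.le hJ' (by linarith)
  exact IsOptimalChannels.antitone hμ0.le hμ1.le hmJ hmJ' hdiv

/-- Delay-tolerant system: the optimal number of activated channels is
nonincreasing in the value of the continuation. If `J ≤ J' ≤ 1` and `m(J)` is
the maximizer of `-dm + (1-(1-μ)^m)(1-J)` characterized by
`m(J) = 0` iff `μ < d/(1-J)` and, for `k ≥ 1`, `m(J) = k` iff
`(1-μ)^k μ < d/(1-J) < (1-μ)^{k-1} μ`, then `m(J') ≤ m(J)`. -/
theorem optimal_channels_antitone (d μ : ℝ) (hd0 : 0 < d) (hd1 : d ≤ 1)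
    (hμ0 : 0 < μ) (hμ1 : μ < 1) (J J' : ℝ) (hJJ' : J ≤ J') (hJ'1 : J' ≤ 1)
    (mJ mJ' : ℕ)
    (hmJ : (mJ = 0 ∧ μ < d / (1 - J)) ∨
      (1 ≤ mJ ∧ (1 - μ) ^ mJ * μ < d / (1 - J) ∧
        d / (1 - J) < (1 - μ) ^ (mJ - 1) * μ))
    (hmJ' : (mJ' = 0 ∧ μ < d / (1 - J')) ∨
      (1 ≤ mJ' ∧ (1 - μ) ^ mJ' * μ < d / (1 - J') ∧
        d / (1 - J') < (1 - μ) ^ (mJ' - 1) * μ)) :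
    mJ' ≤ mJ :=
  optimal_channels_antitone_general d μ hd0 hμ0 hμ1 J J' hJJ' mJ mJ' hmJ hmJ'
end
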